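/- arXiv:2404.08280 — 4 statements merged into one kernel-verified Lean document; each statement's English description precedes it below -/
import Mathlib

section
/- Let k ≥ 2t be positive integers and let α = (a_1,…,a_k) ∈ F_2^k be such that t is the maximum index with a_t = 1 (so a_i = 0 for all t < i ≤ k). Then f_α(n) ~ (t!·n)^{1/t} as n → ∞, i.e., lim_{n→∞} f_α(n)/(t!·n)^{1/t} = 1. -/
open Filter

/-- A family `F` of subsets of `[n]` (here `Fin n`) is `α`-intersecting modulo 2 for a
vector `α ∈ F_2^k` if for each `ℓ ∈ [k]`, any `ℓ` pairwise distinct members of `F`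
have an intersection of cardinality congruent to `a_ℓ` modulo 2.
Here `α ℓ` (for `ℓ : Fin k`) denotes the `(ℓ+1)`-st coordinate `a_{ℓ+1}`. -/
def IsIntersecting (k n : ℕ) (α : Fin k → ZMod 2) (F : Finset (Finset (Fin n))) : Prop :=
  ∀ (ℓ : Fin k) (S : Finset (Finset (Fin n))), S ⊆ F → S.card = ℓ.1 + 1 →
    ((S.inf id).card : ZMod 2) = α ℓ

/-- `fMax k n α` is the maximum size of an `α`-intersecting family of subsets of `[n]`. -/
noncomputable def fMax (k n : ℕ) (α : Fin k → ZMod 2) : ℕ :=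
  sSup {m | ∃ F : Finset (Finset (Fin n)), IsIntersecting k n α F ∧ F.card = m}

/-!
Upper bound: if `F` is `α`-intersecting, the indicator vectors in `F_2^n` of the intersections
`⋂ T`, for `T` a `t`-subset of `F`, are orthonormal for the dot product, because
`⋂ T ∩ ⋂ U = ⋂ (T ∪ U)` and `t < |T ∪ U| ≤ 2t ≤ k` unless `T = U`. Hence `C(|F|, t) ≤ n`, which
gives `|F| ≤ (t! n)^(1/t) + t`.

Lower bound: take as ground set the subsets of `[m]` whose size lies in some `J ⊆ [1, t]`, and
as family the `m` stars `{T | i ∈ T}`. The stars of `c` points meet in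
`∑_{j ∈ J, j ≥ c} C(m - c, j - c)` sets; modulo 2 this is a unitriangular system in the indicator
of `J`, so `J` can be chosen to realise `a_1, …, a_t`, while for `c > t` the intersection is empty.
The ground set has at most `C(m + t, t) ≤ (m + t)^t / t!` points.
-/

open Finset Topology

theorem exists_solution_of_unitriangular {R : Type*} [Ring R] (A : ℕ → ℕ → R)
    (hA : ∀ c, A c c = 1) (b : ℕ → R) (t : ℕ) :
    ∃ x : ℕ → R, ∀ c ≤ t, ∑ j ∈ Icc c t, x j * A c j = b c := by
  suffices ∀ s ≤ t + 1, ∃ x : ℕ → R, ∀ c, s ≤ c → c ≤ t → ∑ j ∈ Icc c t, x j * A c j = b c by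
    obtain ⟨x, hx⟩ := this 0 t.zero_le.step
    exact ⟨x, fun c hc => hx c c.zero_le hc⟩
  intro s hs
  refine Nat.decreasingInduction (fun s _ ih => ?_) ⟨0, fun c hc hct => by omega⟩ hs
  obtain ⟨x, hx⟩ := ih
  have hupd : ∀ u : Finset ℕ, s ∉ u → ∀ c y, ∑ j ∈ u, Function.update x s y j * A c j =
      ∑ j ∈ u, x j * A c j :=
    fun u hu c y => sum_congr rfl fun j hj => by
      rw [Function.update_of_ne (ne_of_mem_of_not_mem hj hu)]
  -- back substitution: the equation for `c = s` determines `x s`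
  refine ⟨Function.update x s (b s - ∑ j ∈ Ioc s t, x j * A s j), fun c hsc hct => ?_⟩
  rcases hsc.eq_or_lt with rfl | hlt
  · rw [← Ioc_insert_left hct, sum_insert left_notMem_Ioc, Function.update_self, hA, mul_one,
      hupd _ left_notMem_Ioc]
    abel
  · rw [hupd _ (fun h => by grind), hx c hlt hct]

theorem card_supersets_of_card {α : Type*} [Fintype α] [DecidableEq α] (I : Finset α) {j : ℕ}
    (hj : #I ≤ j) :
    #{T : Finset α | I ⊆ T ∧ #T = j} = (Fintype.card α - #I).choose (j - #I) := by
  rw [← card_compl, ← card_powersetCard]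
  refine card_nbij' (· \ I) (· ∪ I) ?_ ?_ ?_ ?_
  · intro T hT
    simp only [mem_coe, mem_filter, mem_univ, true_and] at hT
    simp [subset_iff, card_sdiff_of_subset hT.1, hT.2]
  · intro U hU
    simp only [mem_coe, mem_powersetCard, subset_compl_iff_disjoint_right] at hU
    simp [card_union_of_disjoint hU.1, hU.2]
    omega
  · intro T hT
    simp only [mem_coe, mem_filter, mem_univ, true_and] at hT
    exact sdiff_union_of_subset hT.1
  · intro U hU
    simp only [mem_coe, mem_powersetCard, subset_compl_iff_disjoint_right] at hU
    exact union_sdiff_cancel_right hU.1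

theorem sum_range_choose_le_add_choose (m t : ℕ) :
    ∑ j ∈ range (t + 1), m.choose j ≤ (m + t).choose t := by
  induction t with
  | zero => simp
  | succ t ih =>
    rw [sum_range_succ, ← add_assoc, Nat.choose_succ_succ']
    exact add_le_add ih (Nat.choose_le_choose _ (Nat.le_add_right m t))

section Levels

variable {m : ℕ} (J : Finset ℕ)

abbrev Levels (m : ℕ) (J : Finset ℕ) : Type := {T : Finset (Fin m) // #T ∈ J}

def levelStar (m : ℕ) (J : Finset ℕ) (i : Fin m) : Finset (Levels m J) :=
  {T : Levels m J | i ∈ T.1}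

theorem card_inf_levelStar (I : Finset (Fin m)) :
    #(I.inf (levelStar m J)) = ∑ j ∈ J with #I ≤ j, (m - #I).choose (j - #I) := by
  have : I.inf (levelStar m J) = ({T | I ⊆ T.1} : Finset (Levels m J)) := by
    ext T; simp [levelStar, mem_inf, subset_iff]
  rw [this, ← Fintype.card_subtype,
    Fintype.card_congr (Equiv.subtypeSubtypeEquivSubtypeInter _ _), Fintype.card_subtype,
    card_eq_sum_card_fiberwise (f := card) (t := J)
      (fun T hT => (mem_filter.1 hT).2.1), sum_filter]
  refine sum_congr rfl fun j hj => ?_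
  split_ifs with h
  · calc _ = #{T : Finset (Fin m) | I ⊆ T ∧ #T = j} := by congr 1; ext T; simp; grind
      _ = _ := by rw [card_supersets_of_card I h, Fintype.card_fin]
  · simp only [card_eq_zero, filter_eq_empty_iff, mem_filter]
    rintro T ⟨-, -, hIT⟩ rfl
    exact h (card_le_card hIT)

theorem card_levels : Fintype.card (Levels m J) = ∑ j ∈ J, m.choose j := by
  rw [Fintype.card_subtype,
    card_eq_sum_card_fiberwise (f := card) (t := J) (fun T hT => by simpa using hT)]
  refine sum_congr rfl fun j hj => ?_
  calc _ = #(powersetCard j (univ : Finset (Fin m))) := by congr 1; ext T; simp; grind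
    _ = _ := by rw [card_powersetCard, card_univ, Fintype.card_fin]

theorem levelStar_injective {j : ℕ} (hj : j ∈ J) (hj0 : 0 < j) (hjm : j < m) :
    Function.Injective (levelStar m J) := by
  intro i i' h
  by_contra hne
  obtain ⟨s, hs, hcard⟩ := exists_subset_card_eq (s := ({i, i'} : Finset (Fin m))ᶜ) (n := j - 1)
    (by rw [card_compl, Fintype.card_fin]; have := card_le_two (a := i) (b := i'); omega)
  have his : i ∉ s := fun h => by simpa using hs h
  have hi's : i' ∉ s := fun h => by simpa using hs h
  have hT : #(insert i s) ∈ J := by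
    rw [card_insert_of_notMem his, hcard, Nat.sub_add_cancel hj0]; exact hj
  have := congrArg (⟨insert i s, hT⟩ ∈ ·) h
  simp [levelStar] at this
  grind

end Levels

theorem exists_levels_parity (m : ℕ) {t : ℕ} (ht : 1 ≤ t) (a : ℕ → ZMod 2)
    (ha : ∀ c, t ≤ c → a c = if c = t then 1 else 0) :
    ∃ J ⊆ Icc 1 t, t ∈ J ∧
      ∀ c, 1 ≤ c → (∑ j ∈ J with c ≤ j, ((m - c).choose (j - c) : ZMod 2)) = a c := by
  obtain ⟨x, hx⟩ :=
    exists_solution_of_unitriangular (fun c j => ((m - c).choose (j - c) : ZMod 2)) (by simp) a t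
  have hxt : x t = 1 := by simpa [ha t le_rfl] using hx t le_rfl
  refine ⟨{j ∈ Icc 1 t | x j = 1}, filter_subset _ _, by simp [ht, hxt], fun c hc => ?_⟩
  rcases le_or_gt c t with hct | htc
  · have hmul : ∀ z y : ZMod 2, (if z = 1 then y else 0) = z * y := by decide
    have hJc : {j ∈ Icc 1 t | x j = 1 ∧ c ≤ j} = {j ∈ Icc c t | x j = 1} := by
      ext j; simp only [mem_filter, mem_Icc]; grind
    rw [filter_filter, hJc, sum_filter, ← hx c hct]
    exact sum_congr rfl fun j _ => hmul _ _
  · rw [ha c htc.le, if_neg htc.ne', sum_eq_zero]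
    intro j hj
    simp at hj
    omega

section fMax

variable {k n : ℕ} {α : Fin k → ZMod 2}

theorem isIntersecting_empty : IsIntersecting k n α ∅ := by
  intro ℓ S hS hcard
  simp [subset_empty.1 hS] at hcard

theorem bddAbove_card_isIntersecting :
    BddAbove {m | ∃ F : Finset (Finset (Fin n)), IsIntersecting k n α F ∧ #F = m} :=
  ⟨2 ^ n, by rintro _ ⟨F, -, rfl⟩; simpa using F.card_le_univ⟩

theorem exists_isIntersecting_card_eq_fMax :
    ∃ F : Finset (Finset (Fin n)), IsIntersecting k n α F ∧ #F = fMax k n α :=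
  Nat.sSup_mem (s := {m | ∃ F : Finset (Finset (Fin n)), IsIntersecting k n α F ∧ #F = m})
    ⟨0, ∅, isIntersecting_empty, card_empty⟩ bddAbove_card_isIntersecting

theorem card_le_fMax {F : Finset (Finset (Fin n))} (hF : IsIntersecting k n α F) :
    #F ≤ fMax k n α :=
  le_csSup bddAbove_card_isIntersecting ⟨F, hF, rfl⟩

theorem card_le_fMax_of_injective {ι γ : Type*} [Fintype ι] [Fintype γ] [DecidableEq γ]
    (B : ι → Finset γ) (hB : Function.Injective B) (hγ : Fintype.card γ ≤ n)
    (hpar : ∀ (ℓ : Fin k) (I : Finset ι), #I = ℓ.1 + 1 → (#(I.inf B) : ZMod 2) = α ℓ) :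
    Fintype.card ι ≤ fMax k n α := by
  obtain ⟨e⟩ : Nonempty (γ ↪ Fin n) :=
    Function.Embedding.nonempty_of_card_le (by simpa using hγ)
  let B' : ι ↪ Finset (Fin n) := ⟨fun i => (B i).map e, (map_injective e).comp hB⟩
  rw [← card_univ, ← card_map B']
  refine card_le_fMax fun ℓ S hS hcard => ?_
  obtain ⟨I, -, rfl⟩ := subset_map_iff.1 hS
  rw [card_map] at hcard
  have hI : I.Nonempty := card_pos.1 (by omega)
  have hmap : (I.map B').inf id = (I.inf B).map e := by
    rw [inf_map, ← inf'_eq_inf hI, ← inf'_eq_inf hI,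
      apply_inf'_eq_inf'_comp hI (Finset.map e) fun s₁ s₂ => map_inter s₁ s₂]
    rfl
  rw [hmap, card_map, hpar ℓ I hcard]

end fMax

/-- `a_t = 1` and `a_i = 0` for `t < i ≤ k`, where `a_i` is `α ⟨i - 1, _⟩`. -/
def LastOneAt {k : ℕ} (α : Fin k → ZMod 2) (t : ℕ) : Prop :=
  ∀ i : Fin k, t ≤ i.1 + 1 → α i = if i.1 + 1 = t then 1 else 0

theorem lastOneAt_of {t k : ℕ} {α : Fin k → ZMod 2} (ht : 1 ≤ t) (htk : t - 1 < k)
    (hat : α ⟨t - 1, htk⟩ = 1) (h0 : ∀ i : Fin k, t ≤ i.1 → α i = 0) : LastOneAt α t := by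
  intro i hi
  split_ifs with hit
  · rwa [show i = ⟨t - 1, htk⟩ from Fin.ext (by simp only; omega)]
  · exact h0 i (by omega)

namespace IsIntersecting

variable {t k n : ℕ} {α : Fin k → ZMod 2} {F : Finset (Finset (Fin n))}

theorem card_inf_union (ht : 1 ≤ t) (hk : 2 * t ≤ k) (hα : LastOneAt α t)
    (hF : IsIntersecting k n α F) {T U : Finset (Finset (Fin n))}
    (hT : T ⊆ F) (hU : U ⊆ F) (hTt : #T = t) (hUt : #U = t) :
    (#((T ∪ U).inf id) : ZMod 2) = if T = U then 1 else 0 := by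
  split_ifs with hTU
  · rw [← hTU, union_self, hF ⟨t - 1, by omega⟩ T hT (by simp only; omega),
      hα _ (by simp only; omega), if_pos (by simp only; omega)]
  · have hlt : t < #(T ∪ U) := by
      refine hTt ▸ card_lt_card (left_lt_sup.2 fun hUT => hTU ?_)
      exact (eq_of_subset_of_card_le hUT (by omega)).symm
    have hle : #(T ∪ U) ≤ 2 * t := by have := card_union_le T U; omega
    rw [hF ⟨#(T ∪ U) - 1, by omega⟩ _ (union_subset hT hU) (by simp only; omega),
      hα _ (by simp only; omega), if_neg (by simp only; omega)]

theorem choose_card_le (ht : 1 ≤ t) (hk : 2 * t ≤ k) (hα : LastOneAt α t)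
    (hF : IsIntersecting k n α F) :
    (#F).choose t ≤ n := by
  let M : Matrix (F.powersetCard t) (Fin n) (ZMod 2) :=
    Matrix.of fun T x => if x ∈ T.1.inf id then 1 else 0
  have hgram : M * M.transpose = 1 := by
    ext T U
    obtain ⟨hT, hTt⟩ := mem_powersetCard.1 T.2
    obtain ⟨hU, hUt⟩ := mem_powersetCard.1 U.2
    have hinter :
        ({x | x ∈ T.1.inf id ∧ x ∈ U.1.inf id} : Finset (Fin n)) = (T.1 ∪ U.1).inf id := by
      ext x; simp [inf_union]
    simp only [Matrix.mul_apply, Matrix.transpose_apply, M, Matrix.of_apply, ite_zero_mul_ite_zero,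
      mul_one, sum_boole, hinter, hF.card_inf_union ht hk hα hT hU hTt hUt, Matrix.one_apply,
      Subtype.ext_iff]
  calc (#F).choose t = Fintype.card (F.powersetCard t) := by
        rw [Fintype.card_coe, card_powersetCard]
    _ = (M * M.transpose).rank := by rw [hgram, Matrix.rank_one]
    _ ≤ M.rank := Matrix.rank_mul_le_left _ _
    _ ≤ n := (Matrix.rank_le_card_width M).trans (by simp)

end IsIntersecting

theorem le_fMax_of_choose_le {t k n m : ℕ} {α : Fin k → ZMod 2} (ht : 1 ≤ t) (htk : t ≤ k)
    (hα : LastOneAt α t) (htm : t < m) (hn : (m + t).choose t ≤ n) :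
    m ≤ fMax k n α := by
  -- `a c` is the parity prescribed for intersections of `c` members
  let a : ℕ → ZMod 2 := fun c => if h : c - 1 < k then α ⟨c - 1, h⟩ else 0
  have ha : ∀ c, t ≤ c → a c = if c = t then 1 else 0 := by
    intro c hc
    by_cases hck : c - 1 < k
    · simp only [a, dif_pos hck, hα ⟨c - 1, hck⟩ (by simp only; omega)]
      congr 1
      simp only [eq_iff_iff]
      omega
    · simp only [a, dif_neg hck, if_neg (by omega : c ≠ t)]
  obtain ⟨J, hJt, htJ, hJ⟩ := exists_levels_parity m ht a ha
  have hground : Fintype.card (Levels m J) ≤ n := by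
    rw [card_levels]
    calc ∑ j ∈ J, m.choose j ≤ ∑ j ∈ range (t + 1), m.choose j :=
          sum_le_sum_of_subset (hJt.trans fun j hj => by simp at hj ⊢; omega)
      _ ≤ (m + t).choose t := sum_range_choose_le_add_choose m t
      _ ≤ n := hn
  simpa using card_le_fMax_of_injective (levelStar m J) (levelStar_injective J htJ ht htm)
    hground fun ℓ I hI => by rw [card_inf_levelStar, hI, Nat.cast_sum, hJ _ (by omega)]; simp [a]

theorem le_rpow_one_div_natCast_iff {x y : ℝ} (hx : 0 ≤ x) (hy : 0 ≤ y) {t : ℕ}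
    (ht : t ≠ 0) :
    x ≤ y ^ (1 / (t : ℝ)) ↔ x ^ t ≤ y := by
  rw [one_div, Real.le_rpow_inv_iff_of_pos hx hy (by positivity), Real.rpow_natCast]

theorem tendsto_div_nhds_one_of_abs_sub_le {ι : Type*} {l : Filter ι} {f g : ι → ℝ} {c : ℝ}
    (hg : Tendsto g l atTop) (hfg : ∀ᶠ i in l, |f i - g i| ≤ c) :
    Tendsto (fun i => f i / g i) l (𝓝 1) := by
  have h0 : Tendsto (fun i => (f i - g i) / g i) l (𝓝 0) := by
    refine squeeze_zero_norm' ?_ ((tendsto_const_nhds (x := c)).div_atTop hg)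
    filter_upwards [hfg, hg.eventually_gt_atTop 0] with i hi hpos
    rw [norm_div, Real.norm_of_nonneg hpos.le]
    exact div_le_div_of_nonneg_right hi hpos.le
  refine Tendsto.congr' ?_ (by simpa using h0.const_add 1)
  filter_upwards [hg.eventually_gt_atTop 0] with i hi
  field_simp
  ring

theorem fMax_le_rpow {t k : ℕ} {α : Fin k → ZMod 2} (ht : 1 ≤ t) (hk : 2 * t ≤ k)
    (hα : LastOneAt α t) (n : ℕ) :
    (fMax k n α : ℝ) ≤ ((t.factorial : ℝ) * n) ^ (1 / (t : ℝ)) + t := by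
  obtain ⟨F, hF, hFc⟩ := exists_isIntersecting_card_eq_fMax (k := k) (n := n) (α := α)
  have hpow : (#F + 1 - t) ^ t ≤ t.factorial * n := calc
    _ ≤ (#F).descFactorial t := Nat.pow_sub_le_descFactorial _ _
    _ = t.factorial * (#F).choose t := Nat.descFactorial_eq_factorial_mul_choose _ _
    _ ≤ t.factorial * n := Nat.mul_le_mul_left _ (hF.choose_card_le ht hk hα)
  have hroot : ((#F + 1 - t : ℕ) : ℝ) ≤ ((t.factorial : ℝ) * n) ^ (1 / (t : ℝ)) :=
    (le_rpow_one_div_natCast_iff (by positivity) (by positivity) (by omega)).2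
      (by exact_mod_cast hpow)
  rw [← hFc]
  calc (#F : ℝ) ≤ ((#F + 1 - t : ℕ) : ℝ) + t := by
        exact_mod_cast (by omega : #F ≤ #F + 1 - t + t)
    _ ≤ _ := by gcongr

theorem rpow_sub_le_fMax {t k n : ℕ} {α : Fin k → ZMod 2} (ht : 1 ≤ t) (htk : t ≤ k)
    (hα : LastOneAt α t) (hn : 2 * t + 1 ≤ ((t.factorial : ℝ) * n) ^ (1 / (t : ℝ))) :
    ((t.factorial : ℝ) * n) ^ (1 / (t : ℝ)) - (t + 1) ≤ fMax k n α := by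
  set X := ((t.factorial : ℝ) * n) ^ (1 / (t : ℝ))
  have hp : 2 * t + 1 ≤ ⌊X⌋₊ := Nat.le_floor (by exact_mod_cast hn)
  have hchoose : ⌊X⌋₊.choose t ≤ n := by
    have hpow : ⌊X⌋₊ ^ t ≤ t.factorial * n := by
      have := (le_rpow_one_div_natCast_iff (x := ⌊X⌋₊) (by positivity) (by positivity)
        (by omega : t ≠ 0)).1 (Nat.floor_le (by positivity))
      exact_mod_cast this
    refine Nat.le_of_mul_le_mul_left ?_ t.factorial_pos
    rw [← Nat.descFactorial_eq_factorial_mul_choose]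
    exact (Nat.descFactorial_le_pow _ _).trans hpow
  have hm := le_fMax_of_choose_le (n := n) (α := α) ht htk hα (m := ⌊X⌋₊ - t) (by omega)
    (by rwa [Nat.sub_add_cancel (by omega)])
  have hcast : ((⌊X⌋₊ - t : ℕ) : ℝ) = ⌊X⌋₊ - t := Nat.cast_sub (by omega)
  have hX : X < ⌊X⌋₊ + 1 := Nat.lt_floor_add_one X
  have : ((⌊X⌋₊ - t : ℕ) : ℝ) ≤ fMax k n α := by exact_mod_cast hm
  linarith

theorem stmt0 (t k : ℕ) (ht : 1 ≤ t) (hk : 2 * t ≤ k) (α : Fin k → ZMod 2)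
    (hat : α ⟨t - 1, by omega⟩ = 1)
    (h0 : ∀ i : Fin k, t ≤ i.1 → α i = 0) :
    Tendsto (fun n : ℕ => (fMax k n α : ℝ) /
      (((t.factorial : ℝ) * (n : ℝ)) ^ ((1 : ℝ) / (t : ℝ)))) atTop (nhds 1) := by
  have hX : Tendsto (fun n : ℕ => ((t.factorial : ℝ) * n) ^ (1 / (t : ℝ))) atTop atTop :=
    (tendsto_rpow_atTop (by positivity)).comp
      (tendsto_natCast_atTop_atTop.const_mul_atTop (by positivity))
  have hα := lastOneAt_of ht (by omega) hat h0
  refine tendsto_div_nhds_one_of_abs_sub_le (c := t + 1) hX ?_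
  filter_upwards [hX.eventually_ge_atTop (2 * t + 1)] with n hn
  have hupper := fMax_le_rpow ht hk hα n
  have hlower := rpow_sub_le_fMax ht (by omega) hα hn
  rw [abs_le]
  constructor <;> linarith
end

section
/- Let s ≥ 1 and let m ≥ s + 1 be an integer with m ≡ s − 1 (mod 2^{φ(s)+1}), where φ(s) is the exponent of 2 in s!. For each j ∈ [m] let E_j = { e : e is an s-element subset of [m] with j ∈ e }. Then for any ℓ ≥ 1 and any pairwise distinct indices j_1,…,j_ℓ ∈ [m], the cardinality |E_{j_1} ∩ ⋯ ∩ E_{j_ℓ}| is odd if ℓ = s and even if ℓ ≠ s. Equivalently, the family {E_1,…,E_m} is ε_s-intersecting modulo 2, where ε_s ∈ F_2^m has a 1 only in position s. -/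
/-!
The intersection of the `E_j` over a set `T` of indices consists of the `s`-sets containing `T`,
so it has `C(m - |T|, s - |T|)` elements when `|T| ≤ s` and none otherwise. For `|T| = s` this is
`1`. For `|T| < s` write `(s - |T|)! · C(m - |T|, s - |T|)` as the falling factorial
`(m - |T|) ⋯ (m - s + 1)`: its last factor is divisible by `2^(φ(s)+1)`, while `(s - |T|)!` divides
`s!` and so carries at most `φ(s)` factors of `2`; hence the binomial coefficient is even.
-/

open Finset

lemma Nat.Prime.dvd_of_pow_succ_dvd_mul {p a b k : ℕ} (hp : p.Prime) (ha : a ≠ 0)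
    (hk : a.factorization p ≤ k) (h : p ^ (k + 1) ∣ a * b) : p ∣ b := by
  set v := a.factorization p
  have hsplit : p ^ v * (a / p ^ v) = a := Nat.ordProj_mul_ordCompl_eq_self a p
  have h' : p ^ v * p ∣ p ^ v * (a / p ^ v * b) := by
    rw [← pow_succ, ← mul_assoc, hsplit]
    exact (pow_dvd_pow p (Nat.succ_le_succ hk)).trans h
  exact (Nat.coprime_ordCompl hp ha).dvd_of_dvd_mul_left
    (Nat.dvd_of_mul_dvd_mul_left (pow_pos hp.pos v) h')

lemma Nat.Prime.dvd_choose_sub_of_modEq {p s m ℓ : ℕ} (hp : p.Prime) (hℓs : ℓ < s)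
    (hmod : m ≡ s - 1 [MOD p ^ (s.factorial.factorization p + 1)]) :
    p ∣ (m - ℓ).choose (s - ℓ) := by
  have hlast : p ^ (s.factorial.factorization p + 1) ∣ m - (s - 1) := by
    rcases le_or_gt (s - 1) m with hle | hlt
    · exact (Nat.modEq_iff_dvd' hle).mp hmod.symm
    · rw [Nat.sub_eq_zero_of_le hlt.le]
      exact dvd_zero _
  have hfalling : m - (s - 1) ∣ (s - ℓ).factorial * (m - ℓ).choose (s - ℓ) := by
    rw [← Nat.descFactorial_eq_factorial_mul_choose, show s - ℓ = (s - ℓ - 1) + 1 by omega,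
      Nat.descFactorial_succ, show m - ℓ - (s - ℓ - 1) = m - (s - 1) by omega]
    exact dvd_mul_right _ _
  have hfact : (s - ℓ).factorial.factorization p ≤ s.factorial.factorization p :=
    (Nat.factorization_le_iff_dvd (Nat.factorial_ne_zero _) (Nat.factorial_ne_zero _)).mpr
      (Nat.factorial_dvd_factorial (Nat.sub_le s ℓ)) p
  exact hp.dvd_of_pow_succ_dvd_mul (Nat.factorial_ne_zero _) hfact (hlast.trans hfalling)

lemma Finset.inf_filter_card_eq_and_mem {α : Type*} [Fintype α] [DecidableEq α] (s : ℕ)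
    {T : Finset α} (hT : T.Nonempty) :
    T.inf (fun j => univ.filter (fun e : Finset α => e.card = s ∧ j ∈ e)) =
      univ.filter (fun e : Finset α => e.card = s ∧ T ⊆ e) := by
  ext e
  simp only [mem_inf, mem_filter, mem_univ, true_and]
  obtain ⟨j₀, hj₀⟩ := hT
  exact ⟨fun h => ⟨(h j₀ hj₀).1, fun j hj => (h j hj).2⟩, fun h j hj => ⟨h.1, h.2 hj⟩⟩

lemma Finset.card_filter_card_eq_and_superset {α : Type*} [Fintype α] [DecidableEq α]
    {T : Finset α} {s : ℕ} (hTs : T.card ≤ s) :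
    (univ.filter (fun e : Finset α => e.card = s ∧ T ⊆ e)).card =
      (Fintype.card α - T.card).choose (s - T.card) := by
  rw [← card_compl, ← card_powersetCard]
  refine card_nbij' (· \ T) (· ∪ T) ?_ ?_ ?_ ?_
  · intro e he
    simp only [mem_coe, mem_filter, mem_univ, true_and] at he
    simp only [mem_coe, mem_powersetCard]
    exact ⟨fun x hx => mem_compl.mpr (mem_sdiff.mp hx).2, by rw [card_sdiff_of_subset he.2, he.1]⟩
  · intro u hu
    simp only [mem_coe, mem_powersetCard, subset_compl_iff_disjoint_right] at hu
    simp only [mem_coe, mem_filter, mem_univ, true_and]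
    exact ⟨by rw [card_union_of_disjoint hu.1, hu.2]; omega, subset_union_right⟩
  · intro e he
    simp only [mem_coe, mem_filter, mem_univ, true_and] at he
    exact sdiff_union_of_subset he.2
  · intro u hu
    simp only [mem_coe, mem_powersetCard, subset_compl_iff_disjoint_right] at hu
    exact union_sdiff_cancel_right hu.1

lemma Finset.filter_card_eq_and_superset_eq_empty {α : Type*} [Fintype α] [DecidableEq α]
    {T : Finset α} {s : ℕ} (hsT : s < T.card) :
    univ.filter (fun e : Finset α => e.card = s ∧ T ⊆ e) = ∅ :=
  filter_eq_empty_iff.mpr fun _ _ ⟨hcard, hsub⟩ => by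
    have := card_le_card hsub
    omega

theorem stmt2_general (s m : ℕ) (hmod : m ≡ s - 1 [MOD 2 ^ ((Nat.factorization s.factorial) 2 + 1)])
    (E : Fin m → Finset (Finset (Fin m)))
    (hE : ∀ j, E j = Finset.univ.filter (fun e : Finset (Fin m) => e.card = s ∧ j ∈ e))
    (T : Finset (Fin m)) (hT : T.Nonempty) :
    (T.inf E).card % 2 = if T.card = s then 1 else 0 := by
  rw [show E = _ from funext hE, inf_filter_card_eq_and_mem s hT]
  rcases lt_or_ge s T.card with hsT | hTs
  · rw [filter_card_eq_and_superset_eq_empty hsT, if_neg hsT.ne']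
    rfl
  rw [card_filter_card_eq_and_superset hTs, Fintype.card_fin]
  split_ifs with hcard
  · simp [hcard]
  · exact Nat.mod_eq_zero_of_dvd
      (Nat.prime_two.dvd_choose_sub_of_modEq (lt_of_le_of_ne hTs hcard) hmod)

/-- For `s ≥ 1` and `m ≡ s - 1 (mod 2^(φ(s)+1))` with `m ≥ s + 1`, where `φ(s)` is the
exponent of 2 in `s!`, the intersection of any `ℓ ≥ 1` pairwise distinct members of the family
`E_j = {e ⊆ [m] : |e| = s, j ∈ e}` (indexed by a nonempty `T ⊆ [m]` of distinct indices)
has odd cardinality iff `ℓ = |T| = s`. -/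
theorem stmt2 (s m : ℕ) (hs : 1 ≤ s) (hm : s + 1 ≤ m)
    (hmod : m ≡ s - 1 [MOD 2 ^ ((Nat.factorization s.factorial) 2 + 1)])
    (E : Fin m → Finset (Finset (Fin m)))
    (hE : ∀ j, E j = Finset.univ.filter (fun e : Finset (Fin m) => e.card = s ∧ j ∈ e))
    (T : Finset (Fin m)) (hT : T.Nonempty) :
    (T.inf E).card % 2 = if T.card = s then 1 else 0 :=
  stmt2_general s m hmod E hE T hT
end

section
/- Let s ≥ 1, let i ∈ {0,1,…,2^s − 1}, and let m ≥ 2^s be an integer with m ≡ i (mod 2^{φ(2^s−1)+1}), where φ(r) is the exponent of 2 in r!. For each j ∈ [m] let Ē_j = { e : e is a (2^s − 1)-element subset of [m] with j ∉ e }. Then for any ℓ ≥ 1 and any pairwise distinct indices j_1,…,j_ℓ ∈ [m], the cardinality |Ē_{j_1} ∩ ⋯ ∩ Ē_{j_ℓ}| = C(m−ℓ, 2^s−1) is odd if ℓ ≡ i + 1 (mod 2^s) and even otherwise. Equivalently, the family {Ē_1,…,Ē_m} is ε̇_{i+1,2^s}-intersecting modulo 2, where ε̇_{i+1,2^s} ∈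 F_2^m is the 0-1 vector with 1s exactly in the positions congruent to i+1 modulo 2^s. -/
/-!
The members `Ē_j`, `j ∈ T`, intersect in the `(2^s - 1)`-subsets of the complement of `T`, so the
intersection has `C(m - ℓ, 2^s - 1)` elements. By Lucas' theorem this is odd iff
`2^s ∣ m - ℓ + 1`, i.e. iff `ℓ ≡ m + 1 (mod 2^s)`; and the hypothesis on `m` gives `m ≡ i (mod 2^s)`
because `2^(s-1)` divides `(2^s - 1)!`.
-/

open Finset Nat

theorem Nat.odd_choose_two_pow_sub_one_iff (s n : ℕ) :
    Odd (n.choose (2 ^ s - 1)) ↔ 2 ^ s ∣ n + 1 := by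
  induction s generalizing n with
  | zero => simp
  | succ s ih =>
    have : Fact (Nat.Prime 2) := ⟨Nat.prime_two⟩
    have hlucas := Choose.choose_modEq_choose_mod_mul_choose_div_nat (n := n) (k := 2 ^ (s + 1) - 1)
      (p := 2)
    have hpos : 0 < 2 ^ s := by positivity
    rw [show (2 ^ (s + 1) - 1) % 2 = 1 by omega, show (2 ^ (s + 1) - 1) / 2 = 2 ^ s - 1 by omega,
      choose_one_right] at hlucas
    rw [odd_iff, hlucas, ← odd_iff, Nat.odd_mul, odd_iff, Nat.mod_mod, ← odd_iff, ih]
    rcases Nat.even_or_odd n with hn | hn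
    · have h2 : ¬ 2 ∣ n + 1 := by simpa [← even_iff_two_dvd, Nat.even_add_one] using hn
      simp only [Nat.not_odd_iff_even.mpr hn, false_and, false_iff]
      exact fun h => h2 ((dvd_pow_self 2 (succ_ne_zero s)).trans h)
    · rw [show n + 1 = 2 * (n / 2 + 1) by have := Nat.odd_iff.mp hn; omega, pow_succ',
        Nat.mul_dvd_mul_iff_left two_pos]
      exact and_iff_right hn

theorem Nat.le_factorization_factorial_two_pow_sub_one_add_one (s : ℕ) :
    s ≤ (2 ^ s - 1)!.factorization 2 + 1 := by
  rcases s with _ | t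
  · exact Nat.zero_le _
  · have hdvd : 2 ^ t ∣ (2 ^ (t + 1) - 1)! :=
      Nat.dvd_factorial (by positivity) (by rw [pow_succ]; have := Nat.one_le_two_pow (n := t); omega)
    have := (Nat.prime_two.pow_dvd_iff_le_factorization (factorial_ne_zero _)).mp hdvd
    omega

theorem Finset.inf_filter_card_eq_and_notMem {α : Type*} [Fintype α] [DecidableEq α]
    {T : Finset α} (hT : T.Nonempty) (k : ℕ) :
    T.inf (fun j => univ.filter fun e : Finset α => e.card = k ∧ j ∉ e) = Tᶜ.powersetCard k := by
  ext e
  simp only [mem_inf, mem_filter, mem_univ, true_and, mem_powersetCard]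
  constructor
  · intro h
    obtain ⟨j, hj⟩ := hT
    exact ⟨fun x hx => mem_compl.mpr fun hxT => (h x hxT).2 hx, (h j hj).1⟩
  · rintro ⟨hsub, hcard⟩ j hj
    exact ⟨hcard, fun hje => mem_compl.mp (hsub hje) hj⟩

theorem stmt4_general (s m i : ℕ)
    (hmod : m ≡ i [MOD 2 ^ ((Nat.factorization (2 ^ s - 1).factorial) 2 + 1)])
    (E : Fin m → Finset (Finset (Fin m)))
    (hE : ∀ j, E j = Finset.univ.filter (fun e : Finset (Fin m) => e.card = 2 ^ s - 1 ∧ j ∉ e))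
    (T : Finset (Fin m)) (hT : T.Nonempty) :
    (T.inf E).card % 2 = if T.card % 2 ^ s = (i + 1) % 2 ^ s then 1 else 0 := by
  have hmi : m ≡ i [MOD 2 ^ s] :=
    hmod.of_dvd (pow_dvd_pow 2 (le_factorization_factorial_two_pow_sub_one_add_one s))
  have hTm : T.card ≤ m := by simpa using T.card_le_univ
  have hcard : (T.inf E).card = (m - T.card).choose (2 ^ s - 1) := by
    rw [funext hE, inf_filter_card_eq_and_notMem hT, card_powersetCard, card_compl, Fintype.card_fin]
  have hparity : Odd ((m - T.card).choose (2 ^ s - 1)) ↔ T.card ≡ i + 1 [MOD 2 ^ s] := by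
    rw [odd_choose_two_pow_sub_one_iff, ← Nat.sub_add_comm hTm, ← Nat.modEq_iff_dvd' (by omega)]
    exact ⟨fun h => h.trans (hmi.add_right 1), fun h => h.trans (hmi.add_right 1).symm⟩
  rw [hcard]
  split_ifs with h
  · exact odd_iff.mp (hparity.mpr h)
  · exact Nat.not_odd_iff.mp (mt hparity.mp h)

/-- For `s ≥ 1`, `0 ≤ i ≤ 2^s - 1` and `m ≡ i (mod 2^(φ(2^s-1)+1))` with `m ≥ 2^s`, where
`φ(r)` is the exponent of 2 in `r!`, the intersection of any `ℓ ≥ 1` pairwise distinct members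
of the family `Ē_j = {e ⊆ [m] : |e| = 2^s - 1, j ∉ e}` (indexed by a nonempty `T ⊆ [m]` of
distinct indices) has odd cardinality iff `ℓ = |T| ≡ i + 1 (mod 2^s)`. -/
theorem stmt4 (s m i : ℕ) (hs : 1 ≤ s) (hi : i < 2 ^ s) (hm : 2 ^ s ≤ m)
    (hmod : m ≡ i [MOD 2 ^ ((Nat.factorization (2 ^ s - 1).factorial) 2 + 1)])
    (E : Fin m → Finset (Finset (Fin m)))
    (hE : ∀ j, E j = Finset.univ.filter (fun e : Finset (Fin m) => e.card = 2 ^ s - 1 ∧ j ∉ e))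
    (T : Finset (Fin m)) (hT : T.Nonempty) :
    (T.inf E).card % 2 = if T.card % 2 ^ s = (i + 1) % 2 ^ s then 1 else 0 :=
  stmt4_general s m i hmod E hE T hT
end

section
/- Let p be a prime, s ≥ 1, i ∈ {0,1,…,p^s − 1}, and let m ≥ p^s be an integer with m ≡ i (mod p^{φ_p(p^s−1)+1}), where φ_p(r) is the exponent of p in r!. For each j ∈ [m] let Ē_j = { e : e is a (p^s − 1)-element subset of [m] with j ∉ e }. Then for any ℓ ≥ 1 and any pairwise distinct indices j_1,…,j_ℓ ∈ [m], the cardinality |Ē_{j_1} ∩ ⋯ ∩ Ē_{j_ℓ}| = C(m−ℓ, p^s−1) satisfies: it is ≡ 1 (mod p) if ℓ ≡ i + 1 (mod p^s), and ≡ 0 (mod p) otherwise. Equivalently, the family {Ē_1,…,Ē_m} is ε̇_{i+1,p^s}-intersecting modulo p. -/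
/-!
The intersection of the `Ē_j` over `j ∈ T` consists of the `(p^s - 1)`-subsets of `Tᶜ`, so it has
`C(m - ℓ, p^s - 1)` elements. Since the base-`p` digits of `p^s - 1` are all `p - 1`, Lucas'
theorem gives `C(n, p^s - 1) ≡ 1 (mod p)` if `p^s ∣ n + 1` and `≡ 0` otherwise. Finally
`p^(s-1) ≤ p^s - 1` forces `s - 1 ≤ φ_p(p^s - 1)`, so `m ≡ i (mod p^s)`, and
`p^s ∣ m - ℓ + 1` becomes `ℓ ≡ i + 1 (mod p^s)`.
-/

open Finset

theorem Nat.choose_prime_pow_sub_one_mod {p : ℕ} (hp : p.Prime) (s n : ℕ) :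
    n.choose (p ^ s - 1) % p = if p ^ s ∣ n + 1 then 1 else 0 := by
  have := Fact.mk hp
  induction s generalizing n with
  | zero => simp [Nat.mod_eq_of_lt hp.one_lt]
  | succ s ih =>
    have hp1 : p - 1 < p := Nat.sub_lt hp.pos one_pos
    -- the base-`p` digits of `p ^ (s + 1) - 1` are `p - 1` followed by those of `p ^ s - 1`
    have hk : p ^ (s + 1) - 1 = (p - 1) + p * (p ^ s - 1) := by
      have : p ≤ p * p ^ s := Nat.le_mul_of_pos_right p (pow_pos hp.pos s)
      rw [pow_succ', Nat.mul_sub_one]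
      omega
    have lucas := Choose.choose_modEq_choose_mod_mul_choose_div_nat (p := p) (n := n)
      (k := p ^ (s + 1) - 1)
    rw [hk, Nat.add_mul_mod_self_left, Nat.add_mul_div_left _ _ hp.pos, Nat.mod_eq_of_lt hp1,
      Nat.div_eq_of_lt hp1, zero_add, ← hk] at lucas
    rw [lucas]
    by_cases hn : n % p = p - 1
    · have hn1 : n + 1 = p * (n / p + 1) := by
        have := Nat.div_add_mod n p
        rw [Nat.mul_add_one]
        omega
      rw [hn, Nat.choose_self, one_mul, ih]
      simp only [hn1, pow_succ', Nat.mul_dvd_mul_iff_left hp.pos]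
    · have hlt : n % p < p - 1 := by have := Nat.mod_lt n hp.pos; omega
      have hndvd : ¬ p ^ (s + 1) ∣ n + 1 := fun h => by
        have hdvd : p ∣ n % p + 1 := (Nat.modEq_zero_iff_dvd.mp
          (((Nat.mod_modEq n p).add_right 1).trans (Nat.modEq_zero_iff_dvd.mpr
            ((dvd_pow_self p (Nat.succ_ne_zero s)).trans h))))
        have := Nat.le_of_dvd (Nat.succ_pos _) hdvd
        omega
      rw [Nat.choose_eq_zero_of_lt hlt, if_neg hndvd, zero_mul, Nat.zero_mod]

theorem Nat.le_factorization_factorial_of_pow_le {p k n : ℕ} (hp : p.Prime) (h : p ^ k ≤ n) :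
    k ≤ n.factorial.factorization p :=
  (hp.pow_dvd_iff_le_factorization (Nat.factorial_ne_zero n)).mp
    (Nat.dvd_factorial (pow_pos hp.pos k) h)

theorem Finset.inf_filter_card_eq_and_notMem_eq_powersetCard_compl {α : Type*} [Fintype α]
    [DecidableEq α] {T : Finset α} (hT : T.Nonempty) (k : ℕ) :
    T.inf (fun j => univ.filter (fun e : Finset α => e.card = k ∧ j ∉ e)) = Tᶜ.powersetCard k := by
  obtain ⟨j₀, hj₀⟩ := hT
  ext e
  simp only [mem_inf, mem_filter, mem_univ, true_and, mem_powersetCard,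
    subset_compl_iff_disjoint_left, disjoint_left]
  exact ⟨fun h => ⟨fun a haT => (h a haT).2, (h j₀ hj₀).1⟩,
    fun ⟨hd, hk⟩ j hj => ⟨hk, hd hj⟩⟩

theorem Nat.dvd_sub_add_one_iff_modEq {q m i l : ℕ} (hl : l ≤ m) (h : m ≡ i [MOD q]) :
    q ∣ m - l + 1 ↔ l ≡ i + 1 [MOD q] := by
  rw [← Nat.sub_add_comm hl, ← Nat.modEq_iff_dvd' (by omega)]
  exact ⟨fun h' => h'.trans (h.add_right 1), fun h' => h'.trans (h.add_right 1).symm⟩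

theorem stmt16_general (p : ℕ) (hp : p.Prime) (s m i : ℕ) (hs : 1 ≤ s)
    (hmod : m ≡ i [MOD p ^ ((Nat.factorization (p ^ s - 1).factorial) p + 1)])
    (E : Fin m → Finset (Finset (Fin m)))
    (hE : ∀ j, E j = Finset.univ.filter (fun e : Finset (Fin m) => e.card = p ^ s - 1 ∧ j ∉ e))
    (T : Finset (Fin m)) (hT : T.Nonempty) :
    (T.inf E).card % p = if T.card % p ^ s = (i + 1) % p ^ s then 1 else 0 := by
  obtain rfl : E = _ := funext hE
  have hφ : s - 1 ≤ (p ^ s - 1).factorial.factorization p :=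
    Nat.le_factorization_factorial_of_pow_le hp
      (Nat.le_sub_one_of_lt (Nat.pow_lt_pow_right hp.one_lt (by omega)))
  have hmi : m ≡ i [MOD p ^ s] := hmod.of_dvd (pow_dvd_pow p (by omega))
  have hTm : T.card ≤ m := by simpa using T.card_le_univ
  rw [inf_filter_card_eq_and_notMem_eq_powersetCard_compl hT, card_powersetCard, card_compl,
    Fintype.card_fin, Nat.choose_prime_pow_sub_one_mod hp]
  exact if_congr (Nat.dvd_sub_add_one_iff_modEq hTm hmi) rfl rfl

/-- For a prime `p`, `s ≥ 1`, `0 ≤ i ≤ p^s - 1` and `m ≡ i (mod p^(φ_p(p^s-1)+1))` with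
`m ≥ p^s`, where `φ_p(r)` is the exponent of `p` in `r!`, the intersection of any `ℓ ≥ 1`
pairwise distinct members of the family `Ē_j = {e ⊆ [m] : |e| = p^s - 1, j ∉ e}` (indexed by a
nonempty `T ⊆ [m]` of distinct indices) has cardinality `≡ 1 (mod p)` if
`ℓ = |T| ≡ i + 1 (mod p^s)`, and `≡ 0 (mod p)` otherwise. -/
theorem stmt16 (p : ℕ) (hp : p.Prime) (s m i : ℕ) (hs : 1 ≤ s) (hi : i < p ^ s)
    (hm : p ^ s ≤ m)
    (hmod : m ≡ i [MOD p ^ ((Nat.factorization (p ^ s - 1).factorial) p + 1)])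
    (E : Fin m → Finset (Finset (Fin m)))
    (hE : ∀ j, E j = Finset.univ.filter (fun e : Finset (Fin m) => e.card = p ^ s - 1 ∧ j ∉ e))
    (T : Finset (Fin m)) (hT : T.Nonempty) :
    (T.inf E).card % p = if T.card % p ^ s = (i + 1) % p ^ s then 1 else 0 :=
  stmt16_general p hp s m i hs hmod E hE T hT
end
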